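/- For every stream s: if ¬¬(∃ n, ∀ m ≥ n, s m = false) (it is not the case that s is not eventually all blue), then s is not infinitely often red, i.e., ¬ rep s. -/

import Mathlib

/-- The suffix of a stream at position `n`. -/
def suff (s : ℕ → Bool) (n : ℕ) : ℕ → Bool := fun k => s (n + k)

/-- The weak-until predicate transformer (greatest fixed point, impredicative). -/
def W (X : (ℕ → Bool) → Prop) (s : ℕ → Bool) : Prop :=
  ∃ Y : (ℕ → Bool) → Prop, Y s ∧
    ∀ t, Y t → (t 0 = true → X (suff t 1)) ∧ (t 0 = false → Y (suff t 1))

/-- A stream is almost always blue: least fixed point of `W`. -/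
def pre (s : ℕ → Bool) : Prop :=
  ∀ P : (ℕ → Bool) → Prop, (∀ t, W P t → P t) → P s

/-- The strong-until predicate transformer (inductive). -/
inductive U (X : (ℕ → Bool) → Prop) : (ℕ → Bool) → Prop
  | red : ∀ t, t 0 = true → X (suff t 1) → U X t
  | blue : ∀ t, t 0 = false → U X (suff t 1) → U X t

/-- A stream is infinitely often red: greatest fixed point of `U`. -/
def rep (s : ℕ → Bool) : Prop :=
  ∃ P : (ℕ → Bool) → Prop, P s ∧ ∀ t, P t → U P t

/-- `succs s n m` : `m` is the position following the first red position at or after `n`. -/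
def succs (s : ℕ → Bool) (n m : ℕ) : Prop :=
  ∃ l, n ≤ l ∧ (∀ k, n ≤ k → k < l → s k = false) ∧ s l = true ∧ m = l + 1

/-- The set of red positions of a stream. -/
def Reds (s : ℕ → Bool) : Set ℕ := {n | s n = true}

/-- The set of blue positions of a stream. -/
def Blues (s : ℕ → Bool) : Set ℕ := {n | s n = false}

/-- A colist is duplicate-free over `A`: entries lie in `A` and entries at
distinct positions are distinct. -/
def DupFree (l : Stream'.Seq ℕ) (A : Set ℕ) : Prop :=
  (∀ n x, l.get? n = some x → x ∈ A) ∧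
  (∀ m n x y, m ≠ n → l.get? m = some x → l.get? n = some y → x ≠ y)

/-- A set of naturals is streamless if every duplicate-free colist over it is finite. -/
def Streamless (A : Set ℕ) : Prop :=
  ∀ l : Stream'.Seq ℕ, DupFree l A → l.Terminates

/-- A set of naturals is almost full if every strictly increasing sequence hits it. -/
def AlmostFull (A : Set ℕ) : Prop :=
  ∀ i : ℕ → ℕ, StrictMono i → ∃ n, i n ∈ A

/-- A colist is a descending chain of the relation `r` starting at `x`. -/
def IsDescChain (r : ℕ → ℕ → Prop) (x : ℕ) (l : Stream'.Seq ℕ) : Prop :=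
  (∀ y, l.get? 0 = some y → r x y) ∧
  (∀ n a b, l.get? n = some a → l.get? (n + 1) = some b → r a b)

/-- `r` is strongly normalizing at `x`: every descending chain starting at `x` is finite. -/
def SN (r : ℕ → ℕ → Prop) (x : ℕ) : Prop :=
  ∀ l : Stream'.Seq ℕ, IsDescChain r x l → l.Terminates

/-- `n` is antifounded wrt `r`: greatest fixed point of the one-step descent operator. -/
def af (r : ℕ → ℕ → Prop) (n : ℕ) : Prop :=
  ∃ Q : ℕ → Prop, Q n ∧ ∀ k, Q k → ∃ m, r k m ∧ Q m

/-- `atmost n s`: fewer than `n` red positions up to every position `m`. -/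
def atmost (n : ℕ) (s : ℕ → Bool) : Prop :=
  ∀ m, ((Finset.range (m + 1)).filter (fun k => s k = true)).card < n

/-- Iterates of the weak-until operator starting from the empty predicate. -/
def Fiter : ℕ → (ℕ → Bool) → Prop
  | 0 => fun _ => False
  | n + 1 => W (Fiter n)

/-- The ω-iterate of the weak-until operator. -/
def Fomega (s : ℕ → Bool) : Prop := ∃ n, Fiter n s

/-- The Lesser Principle of Omniscience. -/
def LPO : Prop := ∀ s : ℕ → Bool, (∃ n, s n = true) ∨ (∀ n, s n = false)

/-- Markov's Principle. -/
def MP : Prop := ∀ s : ℕ → Bool, ¬(∀ n, s n = false) → ∃ n, s n = true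

/-- Noetherian sets of naturals. -/
inductive Noeth : Set ℕ → Prop
  | intro : ∀ A : Set ℕ, (∀ x ∈ A, Noeth (A \ {x})) → Noeth A

/-! Every witness of `U` reaches a red position, and an invariant witnessing `rep s` can be
shifted along `s`; so a stream satisfying `rep` has a red position beyond every `n`, which an
eventually blue stream does not. -/

theorem suff_zero (s : ℕ → Bool) : suff s 0 = s := by
  funext k
  simp [suff]

theorem suff_suff (s : ℕ → Bool) (m n : ℕ) : suff (suff s m) n = suff s (m + n) := by
  funext k
  simp only [suff, Nat.add_assoc]

theorem U.mono {X Y : (ℕ → Bool) → Prop} (hXY : ∀ t, X t → Y t) {t : ℕ → Bool} (h : U X t) :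
    U Y t := by
  induction h with
  | red t h0 hX => exact U.red t h0 (hXY _ hX)
  | blue t h0 _ ih => exact U.blue t h0 ih

theorem U.exists_red {X : (ℕ → Bool) → Prop} {t : ℕ → Bool} (h : U X t) : ∃ n, t n = true := by
  induction h with
  | red t h0 _ => exact ⟨0, h0⟩
  | blue t _ _ ih =>
    obtain ⟨n, hn⟩ := ih
    exact ⟨1 + n, hn⟩

-- `U P` is again an invariant, and it already holds one step after `s`, whatever the colour of `s 0`.
theorem rep.suff_one {s : ℕ → Bool} (h : rep s) : rep (suff s 1) := by
  obtain ⟨P, hPs, hP⟩ := h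
  refine ⟨U P, ?_, fun t ht => ht.mono hP⟩
  cases hP s hPs with
  | red _ _ hP1 => exact hP _ hP1
  | blue _ _ hU1 => exact hU1

theorem rep.suff {s : ℕ → Bool} (h : rep s) (n : ℕ) : rep (suff s n) := by
  induction n with
  | zero => rwa [suff_zero]
  | succ n ih => simpa only [suff_suff] using ih.suff_one

theorem rep.exists_red_ge {s : ℕ → Bool} (h : rep s) (n : ℕ) : ∃ m, n ≤ m ∧ s m = true := by
  obtain ⟨P, hP, hcl⟩ := h.suff n
  obtain ⟨k, hk⟩ := (hcl _ hP).exists_red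
  exact ⟨n + k, Nat.le_add_right n k, hk⟩

theorem stmt_14 : ∀ s : ℕ → Bool,
    ¬¬(∃ n, ∀ m, n ≤ m → s m = false) → ¬ rep s := by
  intro s hnn hrep
  apply hnn
  rintro ⟨n, hblue⟩
  obtain ⟨m, hnm, hred⟩ := hrep.exists_red_ge n
  rw [hblue m hnm] at hred
  exact Bool.false_ne_true hred
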